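/- For all natural numbers n, k with 1 ≤ k ≤ n: ∑_{i=k}^{n} S(i, k) · C(n, i−1) = k · S(n+1, k+1), where S(·,·) are the Stirling numbers of the second kind and C(·,·) are binomial coefficients. -/
import Mathlib


/-- Stirling numbers of the second kind, defined by `S(0,0) = 1`,
`S(n,k) = 0` when `k > n` or (`n ≥ 1` and `k = 0`), and
`S(n+1,k) = k·S(n,k) + S(n,k-1)`. -/
def stirling2 : ℕ → ℕ → ℕ
  | 0, 0 => 1
  | 0, _ + 1 => 0
  | _ + 1, 0 => 0
  | n + 1, k + 1 => (k + 1) * stirling2 n (k + 1) + stirling2 n k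

lemma stirling2_eq_zero_of_lt : ∀ {n k : ℕ}, n < k → stirling2 n k = 0
  | 0, 0, h => absurd h (lt_irrefl 0)
  | 0, _ + 1, _ => rfl
  | n + 1, k + 1, h => by
    have h1 : n < k := Nat.lt_of_succ_lt_succ h
    have h2 : n < k + 1 := h1.trans (Nat.lt_succ_self k)
    simp [stirling2, stirling2_eq_zero_of_lt h1, stirling2_eq_zero_of_lt h2]

lemma stirling2_one : ∀ n, stirling2 (n + 1) 1 = 1
  | 0 => rfl
  | n + 1 => by
    show 1 * stirling2 (n + 1) 1 + stirling2 (n + 1) 0 = 1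
    rw [stirling2_one n]; rfl

lemma stirling2_succ_eq_sum (n k : ℕ) :
    stirling2 (n + 1) (k + 1) = ∑ j ∈ Finset.range (n + 1), n.choose j * stirling2 j k := by
  induction n generalizing k with
  | zero => simp [stirling2]
  | succ n ih =>
    rw [Finset.sum_range_succ']
    have hpascal : ∀ j ∈ Finset.range (n + 1),
        (n + 1).choose (j + 1) * stirling2 (j + 1) k
          = n.choose j * stirling2 (j + 1) k + n.choose (j + 1) * stirling2 (j + 1) k := by
      intro j _
      rw [Nat.choose_succ_succ, Nat.add_mul]
    rw [Finset.sum_congr rfl hpascal, Finset.sum_add_distrib]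
    have h2 : (∑ j ∈ Finset.range (n + 1), n.choose (j + 1) * stirling2 (j + 1) k)
        + (n + 1).choose 0 * stirling2 0 k = stirling2 (n + 1) (k + 1) := by
      have hs := Finset.sum_range_succ' (fun j => n.choose j * stirling2 j k) (n + 1)
      simp only [Nat.choose_zero_right, one_mul] at hs ⊢
      rw [← hs, Finset.sum_range_succ, Nat.choose_succ_self, zero_mul, add_zero, ih]
    rw [add_assoc (∑ j ∈ Finset.range (n + 1), n.choose j * stirling2 (j + 1) k), h2]
    cases k with
    | zero =>
      have hz : ∀ j ∈ Finset.range (n + 1), n.choose j * stirling2 (j + 1) 0 = 0 := by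
        intro j _; rfl
      rw [Finset.sum_congr rfl hz, Finset.sum_const_zero, zero_add,
        stirling2_one (n + 1), stirling2_one n]
    | succ m =>
      have hrec : ∀ j ∈ Finset.range (n + 1), n.choose j * stirling2 (j + 1) (m + 1)
          = (m + 1) * (n.choose j * stirling2 j (m + 1)) + n.choose j * stirling2 j m := by
        intro j _
        show n.choose j * ((m + 1) * stirling2 j (m + 1) + stirling2 j m) = _
        ring
      rw [Finset.sum_congr rfl hrec, Finset.sum_add_distrib, ← Finset.mul_sum, ← ih, ← ih]
      show (m + 2) * stirling2 (n + 1) (m + 2) + stirling2 (n + 1) (m + 1) = _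
      ring

/-- `∑_{i=k}^{n} S(i,k) C(n,i-1) = k · S(n+1,k+1)` for `1 ≤ k ≤ n`. -/
theorem stirling2_shifted_binomial_sum (n k : ℕ) (hk : 1 ≤ k) (hkn : k ≤ n) :
    (∑ i ∈ Finset.Icc k n, stirling2 i k * n.choose (i - 1))
      = k * stirling2 (n + 1) (k + 1) := by
  obtain ⟨m, rfl⟩ : ∃ m, k = m + 1 := ⟨k - 1, by omega⟩
  have hext : (∑ i ∈ Finset.Icc (m + 1) n, stirling2 i (m + 1) * n.choose (i - 1))
      = ∑ i ∈ Finset.range (n + 1), stirling2 i (m + 1) * n.choose (i - 1) := by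
    apply Finset.sum_subset
    · intro i hi
      simp only [Finset.mem_Icc] at hi
      simp only [Finset.mem_range]
      omega
    · intro i hi hni
      simp only [Finset.mem_range] at hi
      simp only [Finset.mem_Icc] at hni
      have : i < m + 1 := by omega
      rw [stirling2_eq_zero_of_lt this, zero_mul]
  rw [hext, Finset.sum_range_succ']
  have h0 : stirling2 0 (m + 1) * n.choose (0 - 1) = 0 := by simp [stirling2]
  rw [h0, add_zero]
  have hrec : ∀ i ∈ Finset.range n, stirling2 (i + 1) (m + 1) * n.choose (i + 1 - 1)
      = (m + 1) * (n.choose i * stirling2 i (m + 1)) + n.choose i * stirling2 i m := by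
    intro i _
    show ((m + 1) * stirling2 i (m + 1) + stirling2 i m) * n.choose i = _
    ring
  rw [Finset.sum_congr rfl hrec, Finset.sum_add_distrib, ← Finset.mul_sum]
  have hA : (∑ i ∈ Finset.range n, n.choose i * stirling2 i (m + 1)) + stirling2 n (m + 1)
      = stirling2 (n + 1) (m + 2) := by
    rw [stirling2_succ_eq_sum n (m + 1), Finset.sum_range_succ, Nat.choose_self, one_mul]
  have hB : (∑ i ∈ Finset.range n, n.choose i * stirling2 i m) + stirling2 n m
      = stirling2 (n + 1) (m + 1) := by
    rw [stirling2_succ_eq_sum n m, Finset.sum_range_succ, Nat.choose_self, one_mul]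
  have hC : stirling2 (n + 1) (m + 1) = (m + 1) * stirling2 n (m + 1) + stirling2 n m := rfl
  nlinarith [hA, hB, hC]
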